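/- For all β > 0, K > 0 and R > 0, the tight trumpet partition function equals e^{2Rβ} times the JT trumpet partition function; explicitly, (1/(2√(πβ)))·e^{−K²/(4β)} + ∫_K^∞ b · (1/(2√(πβ)))·e^{−b²/(4β)} · √(2R/(b² − K²)) · I₁(√(b² − K²)·√(2R)) db = (1/(2√(πβ)))·e^{−K²/(4β) + 2Rβ}. -/

import Mathlib

/-!
Substituting `u = b² - K²` (so `b db = du / 2`) pulls out the factor `e^{-K²/(4β)}` and leaves
the Laplace transform of the half-tight cylinder in `u`. The power series of `I₁` writes the
kernel as `∑ R^{k+1} u^k / (2^k k! (k+1)!)`, and integrating term by term against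
`e^{-u/(4β)}` (all terms are nonnegative, so this is legitimate) gives
`∑ 2 (2Rβ)^{k+1} / (k+1)! = 2 (e^{2Rβ} - 1)`. The boundary term `e^{-K²/(4β)}` supplies the
missing constant term of the exponential series.
-/

open Real MeasureTheory

/-- Modified Bessel function of the first kind of integer order `ν`. -/
noncomputable def besselI (ν : ℕ) (x : ℝ) : ℝ :=
  ∑' k : ℕ, (x / 2) ^ (2 * k + ν) / ((Nat.factorial k : ℝ) * (Nat.factorial (k + ν) : ℝ))

open Set Nat

lemma integral_tsum_of_nonneg {ι α : Type*} [Countable ι] [MeasurableSpace α] {μ : Measure α}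
    {f : ι → α → ℝ} (hf : ∀ i, Integrable (f i) μ) (hf₀ : ∀ i, 0 ≤ᵐ[μ] f i)
    (hsum : Summable fun i ↦ ∫ a, f i a ∂μ) :
    ∫ a, ∑' i, f i a ∂μ = ∑' i, ∫ a, f i a ∂μ := by
  have hnorm : ∀ i, ∫ a, ‖f i a‖ ∂μ = ∫ a, f i a ∂μ := fun i ↦
    integral_congr_ae <| (hf₀ i).mono fun a ha ↦ Real.norm_of_nonneg ha
  exact (integral_tsum_of_summable_integral_norm hf (by simpa only [hnorm] using hsum)).symm

lemma integral_pow_mul_exp_neg_div_Ioi {c : ℝ} (hc : 0 < c) (k : ℕ) :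
    ∫ u in Ioi 0, u ^ k * exp (-u / c) = c ^ (k + 1) * k ! := by
  have h := integral_rpow_mul_exp_neg_mul_Ioi (a := k + 1) (by positivity) (inv_pos.mpr hc)
  rw [add_sub_cancel_right, one_div, inv_inv, Gamma_nat_eq_factorial, ← Nat.cast_add_one,
    rpow_natCast] at h
  rw [← h]
  refine setIntegral_congr_fun measurableSet_Ioi fun u _ ↦ ?_
  rw [rpow_natCast, neg_div, inv_mul_eq_div]

lemma integrableOn_pow_mul_exp_neg_div_Ioi {c : ℝ} (hc : 0 < c) (k : ℕ) :
    IntegrableOn (fun u : ℝ ↦ u ^ k * exp (-u / c)) (Ioi 0) := by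
  refine (integrableOn_rpow_mul_exp_neg_mul_rpow (s := k) (p := 1)
    (neg_one_lt_zero.trans_le k.cast_nonneg) one_pos (inv_pos.mpr hc)).congr_fun
    (fun u _ ↦ ?_) measurableSet_Ioi
  simp only [rpow_natCast, rpow_one, neg_div, inv_mul_eq_div, neg_mul]

lemma hasSum_pow_succ_div_factorial (x : ℝ) :
    HasSum (fun k : ℕ ↦ x ^ (k + 1) / (k + 1)!) (exp x - 1) := by
  have h := NormedSpace.expSeries_div_hasSum_exp x
  rw [← exp_eq_exp_ℝ, ← hasSum_nat_add_iff' 1] at h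
  simpa using h

/-- The half-tight cylinder `H(b, K)` of the paper, written as a function of `u = b² - K²`. -/
noncomputable def halfTightCylinder (R u : ℝ) : ℝ :=
  √(2 * R / u) * besselI 1 (√u * √(2 * R))

lemma halfTightCylinder_eq_tsum {R u : ℝ} (hR : 0 ≤ R) (hu : 0 < u) :
    halfTightCylinder R u = ∑' k : ℕ, R ^ (k + 1) / (2 ^ k * k ! * (k + 1)!) * u ^ k := by
  have hs : √u ≠ 0 := (sqrt_pos.mpr hu).ne'
  have ht : √(2 * R) ^ 2 = 2 * R := sq_sqrt (by positivity)
  have hx : (√u * √(2 * R) / 2) ^ 2 = R * u / 2 := by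
    rw [div_pow, mul_pow, sq_sqrt hu.le, ht]; ring
  rw [halfTightCylinder, besselI, sqrt_div' _ hu.le, ← tsum_mul_left]
  refine tsum_congr fun k ↦ ?_
  rw [pow_succ, pow_mul, hx, div_pow]
  field_simp
  rw [ht]
  ring

lemma integral_exp_neg_div_mul_halfTightCylinder {β R : ℝ} (hβ : 0 < β) (hR : 0 ≤ R) :
    ∫ u in Ioi 0, exp (-u / (4 * β)) * halfTightCylinder R u = 2 * (exp (2 * R * β) - 1) := by
  set a : ℕ → ℝ := fun k ↦ R ^ (k + 1) / (2 ^ k * k ! * (k + 1)!) with ha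
  have hseries : EqOn (fun u ↦ exp (-u / (4 * β)) * halfTightCylinder R u)
      (fun u ↦ ∑' k, a k * (u ^ k * exp (-u / (4 * β)))) (Ioi 0) := fun u hu ↦ by
    simp only [halfTightCylinder_eq_tsum hR hu, ← tsum_mul_left]
    exact tsum_congr fun k ↦ by ring
  have hterm (k : ℕ) : ∫ u in Ioi 0, a k * (u ^ k * exp (-u / (4 * β))) =
      2 * ((2 * R * β) ^ (k + 1) / (k + 1)!) := by
    have h4 : (4 * β) ^ (k + 1) = 2 ^ k * 2 * (2 * β) ^ (k + 1) := by
      rw [show 4 * β = 2 * (2 * β) by ring, mul_pow, pow_succ]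
    rw [integral_const_mul, integral_pow_mul_exp_neg_div_Ioi (by positivity), ha, h4]
    field_simp
    ring
  have hsum := (hasSum_pow_succ_div_factorial (2 * R * β)).mul_left 2
  rw [setIntegral_congr_fun measurableSet_Ioi hseries, integral_tsum_of_nonneg, tsum_congr hterm,
    hsum.tsum_eq]
  · exact fun k ↦ (integrableOn_pow_mul_exp_neg_div_Ioi (by positivity) k).const_mul (a k)
  · exact fun k ↦ ae_restrict_of_forall_mem measurableSet_Ioi fun u (hu : 0 < u) ↦ by positivity
  · simpa only [hterm] using hsum.summable

lemma integral_Ioi_mul_comp_sq_sub {K : ℝ} (hK : 0 ≤ K) (F : ℝ → ℝ) :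
    ∫ b in Ioi K, b * F (b ^ 2 - K ^ 2) = (∫ u in Ioi 0, F u) / 2 := by
  have himage : (fun b : ℝ ↦ b ^ 2 - K ^ 2) '' Ioi K = Ioi 0 := by
    ext u
    constructor
    · rintro ⟨b, hb : K < b, rfl⟩
      exact sub_pos.mpr (pow_lt_pow_left₀ hb hK two_ne_zero)
    · intro (hu : 0 < u)
      refine ⟨√(u + K ^ 2), (lt_sqrt hK).mpr (by linarith), ?_⟩
      simp only [sq_sqrt (by positivity : 0 ≤ u + K ^ 2), add_sub_cancel_right]
  have hinj : InjOn (fun b : ℝ ↦ b ^ 2 - K ^ 2) (Ioi K) := fun a (ha : K < a) b (hb : K < b) h ↦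
    (sq_eq_sq₀ (hK.trans ha.le) (hK.trans hb.le)).1 (sub_left_injective h)
  have hderiv : ∀ b ∈ Ioi K, HasDerivWithinAt (fun b : ℝ ↦ b ^ 2 - K ^ 2) (2 * b) (Ioi K) b :=
    fun b _ ↦ by simpa using ((hasDerivAt_pow 2 b).sub_const (K ^ 2)).hasDerivWithinAt
  rw [← himage, integral_image_eq_integral_abs_deriv_smul measurableSet_Ioi hderiv hinj,
    ← integral_div]
  refine setIntegral_congr_fun measurableSet_Ioi fun b (hb : K < b) ↦ ?_
  rw [smul_eq_mul, abs_of_pos (by linarith)]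
  ring

theorem stmt10 (β K R : ℝ) (hβ : 0 < β) (hK : 0 < K) (hR : 0 < R) :
    1 / (2 * Real.sqrt (π * β)) * Real.exp (-K ^ 2 / (4 * β)) +
      (∫ b in Set.Ioi K, b * (1 / (2 * Real.sqrt (π * β)) * Real.exp (-b ^ 2 / (4 * β))) *
        (Real.sqrt (2 * R / (b ^ 2 - K ^ 2)) *
          besselI 1 (Real.sqrt (b ^ 2 - K ^ 2) * Real.sqrt (2 * R)))) =
      1 / (2 * Real.sqrt (π * β)) * Real.exp (-K ^ 2 / (4 * β) + 2 * R * β) := by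
  set Z := 1 / (2 * √(π * β))
  have hexp (b : ℝ) : exp (-b ^ 2 / (4 * β)) =
      exp (-K ^ 2 / (4 * β)) * exp (-(b ^ 2 - K ^ 2) / (4 * β)) := by
    rw [← exp_add]
    ring_nf
  have hint : ∫ b in Ioi K, b * (Z * exp (-b ^ 2 / (4 * β))) * halfTightCylinder R (b ^ 2 - K ^ 2) =
      Z * exp (-K ^ 2 / (4 * β)) * (exp (2 * R * β) - 1) := calc
    _ = Z * exp (-K ^ 2 / (4 * β)) * ∫ b in Ioi K,
          b * (exp (-(b ^ 2 - K ^ 2) / (4 * β)) * halfTightCylinder R (b ^ 2 - K ^ 2)) := by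
      rw [← integral_const_mul]
      congr with b
      rw [hexp b]
      ring
    _ = _ := by
      rw [integral_Ioi_mul_comp_sq_sub hK.le fun u ↦ exp (-u / (4 * β)) * halfTightCylinder R u,
        integral_exp_neg_div_mul_halfTightCylinder hβ hR.le]
      ring
  unfold halfTightCylinder at hint
  rw [hint, exp_add]
  ring
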